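/- arXiv:1811.05865 — 5 statements merged into one kernel-verified Lean document; each statement's English description precedes it below -/
import Mathlib

section
/- Let n ≥ 1 and let v_1, ..., v_k be finitely many nonzero vectors in ℂ^n. Then there exists an orthonormal basis (e_1, ..., e_n) of ℂ^n (with respect to the standard Hermitian inner product) such that for every i ∈ {1, ..., n} and every j ∈ {1, ..., k} one has ⟨v_j, e_i⟩ ≠ 0; equivalently, every basis vector e_i lies outside the union of the hyperplanes H_{v_j} = {z ∈ ℂ^n : ⟨v_j, z⟩ = 0}. -/
open Finset
open scoped ComplexOrder

noncomputable section

/-- The `k`-th elementary symmetric polynomial of a finite family of reals. -/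
def esymmFin {N : ℕ} (k : ℕ) (lam : Fin N → ℝ) : ℝ :=
  ∑ s ∈ Finset.univ.powersetCard k, ∏ i ∈ s, lam i

/-- A square complex matrix is `m`-positive if it is Hermitian and the `k`-th elementary
symmetric function of its eigenvalues is positive for every `1 ≤ k ≤ m`. -/
def MPositive {d : ℕ} (m : ℕ) (M : Matrix (Fin d) (Fin d) ℂ) : Prop :=
  ∃ hM : M.IsHermitian, ∀ k, 1 ≤ k → k ≤ m → 0 < esymmFin k hM.eigenvalues

/-- The matrix of the compression `P_H ∘ A|_H` of the Hermitian form of `A` to a subspace,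
computed in an orthonormal family `b` spanning it: the entries are `⟪b i, A (b j)⟫`. -/
def compressionMatrix {n d : ℕ} (A : Matrix (Fin n) (Fin n) ℂ)
    (b : Fin d → EuclideanSpace ℂ (Fin n)) : Matrix (Fin d) (Fin d) ℂ :=
  fun i j => inner ℂ (b i) (Matrix.toEuclideanLin A (b j))

/-- The compression of the Hermitian form of `A` to the subspace `H ⊆ ℂ^n` (the Hermitian
endomorphism `P_H ∘ A|_H` of `H`, `P_H` the orthogonal projection) is `m`-positive:
in every orthonormal basis of `H` its representing matrix is `m`-positive. -/
def CompressionMPositive {n : ℕ} (m : ℕ) (A : Matrix (Fin n) (Fin n) ℂ)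
    (H : Submodule ℂ (EuclideanSpace ℂ (Fin n))) : Prop :=
  ∀ (d : ℕ) (b : Fin d → EuclideanSpace ℂ (Fin n)), Orthonormal ℂ b →
    (∀ i, b i ∈ H) → Submodule.span ℂ (Set.range b) = H →
    MPositive m (compressionMatrix A b)

open Polynomial ComplexConjugate

/-! If `ω` is a primitive `n`-th root of unity and `‖z‖ = 1`, the vectors
`e_i = n^{-1/2} (1, w_i, …, w_i^{n-1})` with `w_i = z ω^i` form an orthonormal basis (a rotated
discrete Fourier basis). For each `v ≠ 0`, `⟪v, e_i⟫ = n^{-1/2} p_v(w_i)`, where `p_v ≠ 0` is the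
polynomial with coefficients `conj (v l)`. As the unit circle is infinite, `z` can be chosen so
that none of the finitely many points `z ω^i` is a root of any `p_{v_j}`. -/

lemma exists_norm_eq_one_forall_mul_notMem {ι : Type*} [Fintype ι] (T : Finset ℂ) {a : ι → ℂ}
    (ha : ∀ i, a i ≠ 0) : ∃ z : ℂ, ‖z‖ = 1 ∧ ∀ i, z * a i ∉ T := by
  have hcircle : (Metric.sphere (0 : ℂ) 1).Infinite :=
    (isPreconnected_sphere (by simp) 0 1).infinite_of_nontrivial
      ⟨1, by simp, -1, by simp, by norm_num⟩
  obtain ⟨z, hz, hzT⟩ := hcircle.exists_notMem_finset (univ.biUnion fun i => T.image (· / a i))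
  refine ⟨z, mem_sphere_zero_iff_norm.mp hz, fun i hi => hzT ?_⟩
  exact mem_biUnion.mpr ⟨i, mem_univ i, mem_image.mpr ⟨_, hi, mul_div_cancel_right₀ z (ha i)⟩⟩

section PowVec

variable {n : ℕ}

def powVec (n : ℕ) (w : ℂ) : EuclideanSpace ℂ (Fin n) :=
  WithLp.toLp 2 fun l => w ^ (l : ℕ)

def conjPoly (v : EuclideanSpace ℂ (Fin n)) : ℂ[X] :=
  ofFn n fun l => conj (v l)

lemma conjPoly_ne_zero {v : EuclideanSpace ℂ (Fin n)} (hv : v ≠ 0) : conjPoly v ≠ 0 := by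
  rw [conjPoly, Ne, map_eq_zero_iff _ (injective_ofFn n)]
  intro h
  exact hv (PiLp.ext fun l => by simpa using congrFun h l)

lemma inner_powVec_eq_eval (v : EuclideanSpace ℂ (Fin n)) (w : ℂ) :
    inner ℂ v (powVec n w) = (conjPoly v).eval w := by
  simp [powVec, conjPoly, PiLp.inner_apply, ofFn_eq_sum_monomial, eval_finsetSum, mul_comm]

lemma inner_powVec_powVec (w w' : ℂ) :
    inner ℂ (powVec n w) (powVec n w') = ∑ l ∈ range n, (conj w * w') ^ l := by
  rw [← Fin.sum_univ_eq_sum_range]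
  simp [powVec, PiLp.inner_apply, mul_pow, mul_comm]

lemma inner_powVec_mul_pow {z ω : ℂ} (hω : IsPrimitiveRoot ω n) (hz : ‖z‖ = 1) (i j : Fin n) :
    inner ℂ (powVec n (z * ω ^ (i : ℕ))) (powVec n (z * ω ^ (j : ℕ))) =
      if i = j then (n : ℂ) else 0 := by
  have hn : n ≠ 0 := (Fin.pos i).ne'
  have hω0 : ω ≠ 0 := hω.ne_zero hn
  have hz0 : z ≠ 0 := norm_ne_zero_iff.mp (by simp [hz])
  have hconj : conj (z * ω ^ (i : ℕ)) = (z * ω ^ (i : ℕ))⁻¹ :=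
    (Complex.inv_eq_conj (by simp [hz, hω.norm'_eq_one hn])).symm
  have hratio : conj (z * ω ^ (i : ℕ)) * (z * ω ^ (j : ℕ)) = (ω ^ (i : ℕ))⁻¹ * ω ^ (j : ℕ) := by
    rw [hconj]; field_simp
  rw [inner_powVec_powVec, hratio]
  set ζ := (ω ^ (i : ℕ))⁻¹ * ω ^ (j : ℕ) with hζ
  split_ifs with hij
  · simp [hζ, hij, hω0]
  · have hζn : ζ ^ n = 1 := by
      rw [hζ, mul_pow, inv_pow, ← pow_mul, ← pow_mul, mul_comm _ n, mul_comm _ n, pow_mul,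
        pow_mul, hω.pow_eq_one]
      simp
    have hζ1 : ζ ≠ 1 := fun h =>
      hij (Fin.ext (hω.pow_inj i.isLt j.isLt (inv_mul_eq_one₀ (pow_ne_zero _ hω0) |>.mp h)))
    rw [geom_sum_eq hζ1, hζn, sub_self, zero_div]

lemma orthonormal_smul_powVec_mul_pow {z ω : ℂ} (hω : IsPrimitiveRoot ω n) (hz : ‖z‖ = 1) :
    Orthonormal ℂ fun i : Fin n => ((√n : ℝ) : ℂ)⁻¹ • powVec n (z * ω ^ (i : ℕ)) := by
  rw [orthonormal_iff_ite]
  intro i j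
  rw [inner_smul_left, inner_smul_right, inner_powVec_mul_pow hω hz]
  split_ifs
  · have hn : (0 : ℝ) < n := Nat.cast_pos.mpr (Fin.pos i)
    rw [map_inv₀, Complex.conj_ofReal, ← mul_assoc, ← mul_inv, ← Complex.ofReal_mul,
      Real.mul_self_sqrt hn.le, Complex.ofReal_natCast, inv_mul_cancel₀ (by exact_mod_cast hn.ne')]
  · simp

end PowVec

/-- Lemma 2.2: given finitely many nonzero vectors `v₁, …, v_k` in `ℂ^n`
(`n ≥ 1`), there is an orthonormal basis `e₁, …, e_n` of `ℂ^n` such that every `e_i` lies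
outside every hyperplane `H_{v_j} = {z : ⟪v_j, z⟫ = 0}`, i.e. `⟪v_j, e_i⟫ ≠ 0` for all `i, j`. -/
theorem stmt0 (n k : ℕ) (hn : 1 ≤ n)
    (v : Fin k → EuclideanSpace ℂ (Fin n)) (hv : ∀ j, v j ≠ 0) :
    ∃ e : OrthonormalBasis (Fin n) ℂ (EuclideanSpace ℂ (Fin n)),
      ∀ (i : Fin n) (j : Fin k), inner ℂ (v j) (e i) ≠ (0 : ℂ) := by
  obtain ⟨ω, hω⟩ : ∃ ω : ℂ, IsPrimitiveRoot ω n := ⟨_, Complex.isPrimitiveRoot_exp n (by omega)⟩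
  obtain ⟨z, hz, hz_roots⟩ := exists_norm_eq_one_forall_mul_notMem
    (univ.biUnion fun j => (conjPoly (v j)).roots.toFinset)
    (a := fun i : Fin n => ω ^ (i : ℕ)) fun i => pow_ne_zero _ (hω.ne_zero (by omega))
  have hon := orthonormal_smul_powVec_mul_pow hω hz
  refine ⟨.mk hon (hon.linearIndependent.span_eq_top_of_card_eq_finrank' (by simp)).ge,
    fun i j => ?_⟩
  rw [OrthonormalBasis.coe_mk, inner_smul_right, inner_powVec_eq_eval]
  refine mul_ne_zero (by simp; omega) fun hroot => hz_roots i ?_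
  exact mem_biUnion.mpr ⟨j, mem_univ j,
    Multiset.mem_toFinset.mpr ((mem_roots (conjPoly_ne_zero (hv j))).mpr hroot)⟩
end
end

section
/- Let 1 ≤ m ≤ n−1 and let A be an n×n Hermitian matrix that is m-positive and positive semidefinite. Then there exists a proper complex linear subspace S ⊊ ℂ^n such that for every v ∈ ℂ^n \ S, the compression of A to the hyperplane v^⊥ = {z ∈ ℂ^n : ⟨v, z⟩ = 0} satisfies e_m(eigenvalues of the compression) > 0; consequently, this compression is m-positive as a Hermitian endomorphism of v^⊥. -/
open Finset
open scoped ComplexOrder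

noncomputable section

/-! Write `A = Rᴴ R`. In an orthonormal basis `b` of a subspace `H`, the compression of `A` is
the Gram matrix of the vectors `R bᵢ`, hence positive semidefinite of rank `dim R(H)`, and for a
positive semidefinite matrix `e_k` of the eigenvalues is positive exactly when `k ≤ rank`.
If `R` is injective, `dim R(v^⊥) = n - 1 ≥ m` for every `v ≠ 0`. Otherwise, for `v ∉ (ker R)^⊥`
some `u ∈ ker R` has `⟪v, u⟫ ≠ 0`; subtracting multiples of `u` moves any vector into `v^⊥`
without changing its image, so `R(v^⊥) = range R`, of dimension `rank A ≥ m`. -/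

open scoped Matrix MatrixOrder InnerProductSpace
open Module Submodule

section Esymm

variable {d : ℕ} {D : Matrix (Fin d) (Fin d) ℂ}

lemma le_rank_of_esymmFin_pos {k : ℕ} (hD : D.IsHermitian) (h : 0 < esymmFin k hD.eigenvalues) :
    k ≤ D.rank := by
  obtain ⟨s, hs, hprod⟩ := Finset.exists_ne_zero_of_sum_ne_zero h.ne'
  rw [hD.rank_eq_card_non_zero_eigs, ← (Finset.mem_powersetCard_univ.mp hs)]
  calc s.card ≤ (univ.filter fun i => hD.eigenvalues i ≠ 0).card :=
        Finset.card_le_card fun i hi =>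
          Finset.mem_filter.mpr ⟨Finset.mem_univ i, fun h0 => hprod (Finset.prod_eq_zero hi h0)⟩
    _ = _ := (Fintype.card_subtype _).symm

lemma esymmFin_pos_of_le_rank {k : ℕ} (hD : D.PosSemidef) (hk : k ≤ D.rank) :
    0 < esymmFin k hD.1.eigenvalues := by
  rw [hD.1.rank_eq_card_non_zero_eigs, Fintype.card_subtype] at hk
  obtain ⟨s, hs, hcard⟩ := Finset.exists_subset_card_eq hk
  refine Finset.sum_pos' (fun t _ => Finset.prod_nonneg fun i _ => hD.eigenvalues_nonneg i)
    ⟨s, Finset.mem_powersetCard_univ.mpr hcard, Finset.prod_pos fun i hi => ?_⟩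
  exact (hD.eigenvalues_nonneg i).lt_of_ne' (Finset.mem_filter.mp (hs hi)).2

lemma mPositive_of_le_rank {m : ℕ} (hD : D.PosSemidef) (hm : m ≤ D.rank) : MPositive m D :=
  ⟨hD.1, fun _ _ hk => esymmFin_pos_of_le_rank hD (hk.trans hm)⟩

end Esymm

lemma Matrix.rank_gram {𝕜 E ι : Type*} [RCLike 𝕜] [NormedAddCommGroup E] [InnerProductSpace 𝕜 E]
    [FiniteDimensional 𝕜 E] [Fintype ι] (v : ι → E) :
    (Matrix.gram 𝕜 v).rank = finrank 𝕜 (span 𝕜 (Set.range v)) := by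
  let b := stdOrthonormalBasis 𝕜 E
  let e : E ≃ₗ[𝕜] (Fin (finrank 𝕜 E) → 𝕜) :=
    b.repr.toLinearEquiv.trans (WithLp.linearEquiv 2 𝕜 _)
  rw [Matrix.gram_eq_conjTranspose_mul b, Matrix.rank_conjTranspose_mul_self,
    Matrix.rank_eq_finrank_span_cols, ← e.finrank_map_eq, Submodule.map_span, ← Set.range_comp]
  rfl

section Hyperplane

variable {𝕜 E F : Type*} [RCLike 𝕜] [NormedAddCommGroup E] [InnerProductSpace 𝕜 E]
  [AddCommGroup F] [Module 𝕜 F]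

lemma LinearMap.map_orthogonal_span_singleton_eq_range (f : E →ₗ[𝕜] F) {v : E}
    (hv : v ∉ (LinearMap.ker f)ᗮ) : map f (𝕜 ∙ v)ᗮ = LinearMap.range f := by
  obtain ⟨u, hu, huv⟩ : ∃ u ∈ LinearMap.ker f, ⟪v, u⟫_𝕜 ≠ 0 := by
    by_contra! h
    exact hv fun u hu => by rw [← inner_conj_symm, h u hu, map_zero]
  refine le_antisymm LinearMap.map_le_range ?_
  rintro _ ⟨x, rfl⟩
  refine ⟨x - (⟪v, x⟫_𝕜 / ⟪v, u⟫_𝕜) • u, ?_, ?_⟩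
  · rw [SetLike.mem_coe, mem_orthogonal_singleton_iff_inner_right, inner_sub_right,
      inner_smul_right, div_mul_cancel₀ _ huv, sub_self]
  · rw [map_sub, map_smul, LinearMap.mem_ker.mp hu, smul_zero, sub_zero]

lemma exists_ne_top_forall_notMem_le_finrank_map [FiniteDimensional 𝕜 E] (f : E →ₗ[𝕜] F)
    {m : ℕ} (hmf : m ≤ finrank 𝕜 (LinearMap.range f)) (hmE : m < finrank 𝕜 E) :
    ∃ S : Submodule 𝕜 E, S ≠ ⊤ ∧ ∀ v ∉ S, m ≤ finrank 𝕜 (map f (𝕜 ∙ v)ᗮ) := by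
  by_cases hf : LinearMap.ker f = ⊥
  · have : Nontrivial E := nontrivial_of_finrank_pos (R := 𝕜) (by omega)
    refine ⟨⊥, bot_ne_top, fun v hv => ?_⟩
    have hv0 : v ≠ 0 := fun h => hv (h ▸ zero_mem ⊥)
    have hdim := finrank_add_finrank_orthogonal (𝕜 ∙ v)
    rw [finrank_span_singleton hv0] at hdim
    rw [← (equivMapOfInjective f (LinearMap.ker_eq_bot.mp hf) _).finrank_eq]
    omega
  · refine ⟨(LinearMap.ker f)ᗮ, fun h => hf ?_, fun v hv => ?_⟩
    · rw [← orthogonal_orthogonal (LinearMap.ker f), h, top_orthogonal_eq_bot]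
    · rwa [f.map_orthogonal_span_singleton_eq_range hv]

end Hyperplane

section Compression

variable {n : ℕ}

lemma Matrix.rank_eq_finrank_range_toEuclideanLin (R : Matrix (Fin n) (Fin n) ℂ) :
    R.rank = finrank ℂ (LinearMap.range (Matrix.toEuclideanLin R)) := by
  rw [Matrix.toEuclideanLin_eq_toLin_orthonormal]
  exact R.rank_eq_finrank_range_toLin _ _

lemma compressionMatrix_conjTranspose_mul_self {d : ℕ} (R : Matrix (Fin n) (Fin n) ℂ)
    (b : Fin d → EuclideanSpace ℂ (Fin n)) :
    compressionMatrix (Rᴴ * R) b = Matrix.gram ℂ (Matrix.toEuclideanLin R ∘ b) := by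
  ext i j
  rw [compressionMatrix, Matrix.toEuclideanLin_eq_toLin_orthonormal,
    Matrix.toLin_mul _ (EuclideanSpace.basisFun (Fin n) ℂ).toBasis,
    ← Matrix.toEuclideanLin_eq_toLin_orthonormal, Matrix.toEuclideanLin_conjTranspose_eq_adjoint,
    LinearMap.comp_apply, LinearMap.adjoint_inner_right]
  rfl

lemma compressionMPositive_of_le_finrank_map {m : ℕ} (R : Matrix (Fin n) (Fin n) ℂ)
    (H : Submodule ℂ (EuclideanSpace ℂ (Fin n)))
    (hm : m ≤ finrank ℂ (map (Matrix.toEuclideanLin R) H)) :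
    CompressionMPositive m (Rᴴ * R) H := by
  intro d b _ _ hspan
  rw [compressionMatrix_conjTranspose_mul_self]
  refine mPositive_of_le_rank (Matrix.posSemidef_gram ℂ _) ?_
  rwa [Matrix.rank_gram, Set.range_comp, ← map_span, hspan]

end Compression

/-- Lemma 2.1, second assertion: if `1 ≤ m ≤ n - 1` and the Hermitian matrix
`A` is `m`-positive and positive semidefinite, then there is a proper complex linear subspace
`S ⊊ ℂ^n` such that for every `v ∉ S` the compression of `A` to the hyperplane
`v^⊥ = {z : ⟪v, z⟫ = 0}` is `m`-positive (in particular `e_m` of its eigenvalues is `> 0`). -/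
theorem stmt2 (n m : ℕ) (hm : 1 ≤ m) (hmn : m < n)
    (A : Matrix (Fin n) (Fin n) ℂ) (hpsd : A.PosSemidef) (hA : MPositive m A) :
    ∃ S : Submodule ℂ (EuclideanSpace ℂ (Fin n)), S ≠ ⊤ ∧
      ∀ v : EuclideanSpace ℂ (Fin n), v ∉ S →
        CompressionMPositive m A (ℂ ∙ v)ᗮ := by
  obtain ⟨R, rfl⟩ := CStarAlgebra.nonneg_iff_eq_star_mul_self.mp hpsd.nonneg
  obtain ⟨hAh, hAe⟩ := hA
  have hrank : m ≤ finrank ℂ (LinearMap.range (Matrix.toEuclideanLin R)) := by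
    rw [← R.rank_eq_finrank_range_toEuclideanLin, ← Matrix.rank_conjTranspose_mul_self]
    exact le_rank_of_esymmFin_pos hAh (hAe m hm le_rfl)
  obtain ⟨S, hS, hSv⟩ := exists_ne_top_forall_notMem_le_finrank_map (Matrix.toEuclideanLin R)
    hrank (by rwa [finrank_euclideanSpace_fin])
  exact ⟨S, hS, fun v hv => compressionMPositive_of_le_finrank_map R _ (hSv v hv)⟩
end
end

section
/- Let 1 ≤ m ≤ n−1 and let A = diag(λ_1, ..., λ_n) be a real diagonal n×n matrix that is m-positive. Then for every vector e = (a_1, ..., a_n) with each a_i ∈ {+1, −1}, the compression of A to the hyperplane e^⊥ = {z ∈ ℂ^n : Σ_i a_i z_i = 0} is m-positive as a Hermitian endomorphism of e^⊥. -/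
open Finset
open scoped ComplexOrder

noncomputable section

/-!
Complete an orthonormal basis `b` of `e^⊥` by the unit normal `u = e / ‖e‖` to an orthonormal
basis of `ℂ^n`, with unitary coordinate matrix `G`. The compression of `A` is the minor of
`Gᴴ A G` obtained by deleting the row and column of `u`, so its characteristic polynomial is the
corresponding diagonal entry of `adj (X - Gᴴ A G) = Gᴴ adj (X - A) G`. As `A = diag λ` and
`|u_i|² = 1/n` for a sign vector `e`, this entry is `(1/n) ∑_i ∏_{j ≠ i} (X - λ_j) = p' / n` with
`p = ∏_j (X - λ_j)`. Comparing coefficients, the eigenvalues `μ` of the compression satisfy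
`e_k(μ) = (n - k)/n · e_k(λ)`, which is positive for `1 ≤ k ≤ m < n`.
-/

open Polynomial Matrix

namespace Matrix

variable {R : Type*} [CommRing R] {ι : Type*} [Fintype ι] [DecidableEq ι]

theorem adjugate_eq_det_smul_of_mul_eq_one {U V : Matrix ι ι R} (h : V * U = 1) :
    adjugate U = U.det • V := by
  calc adjugate U = adjugate U * (U * V) := by rw [mul_eq_one_comm.mp h, mul_one]
    _ = U.det • V := by rw [← mul_assoc, adjugate_mul, smul_one_mul]

theorem adjugate_mul_mul_of_mul_eq_one {U V : Matrix ι ι R} (h : V * U = 1)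
    (M : Matrix ι ι R) : adjugate (V * M * U) = V * adjugate M * U := by
  have hdet : V.det * U.det = 1 := by rw [← det_mul, h, det_one]
  rw [adjugate_mul_distrib, adjugate_mul_distrib, adjugate_eq_det_smul_of_mul_eq_one h,
    adjugate_eq_det_smul_of_mul_eq_one (mul_eq_one_comm.mp h)]
  simp only [Matrix.smul_mul, Matrix.mul_smul, smul_smul, hdet, one_smul, mul_assoc]

theorem map_mul_map_eq_one {S : Type*} [CommRing S] {U V : Matrix ι ι R} (h : V * U = 1)
    (f : R →+* S) : V.map f * U.map f = 1 := by
  rw [← Matrix.map_mul, h, Matrix.map_one _ (map_zero f) (map_one f)]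

theorem charmatrix_mul_mul_of_mul_eq_one {U V : Matrix ι ι R} (h : V * U = 1)
    (M : Matrix ι ι R) : charmatrix (V * M * U) = V.map C * charmatrix M * U.map C := by
  simp only [charmatrix, RingHom.mapMatrix_apply, Matrix.map_mul, mul_sub, sub_mul]
  rw [← (scalar_commute X (fun _ => Commute.all _ _) (V.map C)).eq, mul_assoc (scalar ι X),
    map_mul_map_eq_one h, mul_one]

theorem charpoly_submatrix_succ {d : ℕ} (M : Matrix (Fin (d + 1)) (Fin (d + 1)) R) :
    (M.submatrix Fin.succ Fin.succ).charpoly = (charmatrix M).adjugate 0 0 := by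
  rw [adjugate_fin_succ_eq_det_submatrix, charpoly]
  simp only [Fin.val_zero, add_zero, pow_zero, one_mul, Fin.succAbove_zero]
  congr 1
  ext i j
  by_cases hij : i = j
  · subst hij; simp
  · simp [hij]

theorem charpoly_submatrix_succ_mul_diagonal_mul {d : ℕ}
    {U V : Matrix (Fin (d + 1)) (Fin (d + 1)) R} (h : V * U = 1) (w : Fin (d + 1) → R) :
    ((V * diagonal w * U).submatrix Fin.succ Fin.succ).charpoly =
      ∑ i, C (V 0 i * U i 0) * ∏ j ∈ univ.erase i, (X - C (w j)) := by
  rw [charpoly_submatrix_succ, charmatrix_mul_mul_of_mul_eq_one h,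
    adjugate_mul_mul_of_mul_eq_one (map_mul_map_eq_one h C), charmatrix_diagonal,
    adjugate_diagonal]
  simp only [mul_apply, diagonal_apply, map_apply, mul_ite, mul_zero, sum_ite_eq', mem_univ,
    if_true, C_mul]
  exact sum_congr rfl fun i _ => by ring

theorem IsHermitian.prod_X_sub_C_eigenvalues_eq {M : Matrix ι ι ℂ} (hM : M.IsHermitian)
    {p : ℝ[X]} (h : M.charpoly = p.map (algebraMap ℝ ℂ)) :
    ∏ i, (X - C (hM.eigenvalues i)) = p := by
  apply Polynomial.map_injective (algebraMap ℝ ℂ) RCLike.ofReal_injective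
  rw [hM.charpoly_eq] at h
  simpa [Polynomial.map_prod] using h

end Matrix

namespace Polynomial

variable {R : Type*} [CommRing R]

theorem derivative_prod_X_sub_C {ι : Type*} [Fintype ι] [DecidableEq ι] (w : ι → R) :
    derivative (∏ i, (X - C (w i))) = ∑ i, ∏ j ∈ univ.erase i, (X - C (w j)) := by
  simp [derivative_prod_finset]

theorem coeff_prod_X_sub_C {ι : Type*} [Fintype ι] (w : ι → R) {k : ℕ}
    (hk : k ≤ Fintype.card ι) :
    (∏ i, (X - C (w i))).coeff (Fintype.card ι - k) = (-1) ^ k * (univ.val.map w).esymm k := by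
  have := Multiset.prod_X_sub_C_coeff (univ.val.map w) (k := Fintype.card ι - k) (by simp)
  simpa [Multiset.map_map, Nat.sub_sub_self hk] using this

theorem esymm_eq_of_prod_X_sub_C_eq_C_mul_derivative {d k : ℕ} {μ : Fin d → R}
    {lam : Fin (d + 1) → R} {c : R}
    (h : ∏ i, (X - C (μ i)) = C c * derivative (∏ j, (X - C (lam j)))) (hk : k ≤ d) :
    (univ.val.map μ).esymm k = c * ((d + 1 - k : ℕ) : R) * (univ.val.map lam).esymm k := by
  have hcoeff := congrArg (coeff · (d - k)) h
  have hμ := coeff_prod_X_sub_C μ (k := k) (by simpa)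
  have hlam := coeff_prod_X_sub_C lam (k := k) (by simp; omega)
  simp only [Fintype.card_fin] at hμ hlam
  simp only [coeff_C_mul, coeff_derivative, hμ, ← Nat.sub_add_comm hk, hlam] at hcoeff
  have hsign : ((-1 : R) ^ k) * (-1) ^ k = 1 := by rw [← mul_pow]; simp
  rw [Nat.sub_add_comm hk]
  push_cast
  linear_combination (-1 : R) ^ k * hcoeff -
    ((univ.val.map μ).esymm k - c * ((d - k : ℕ) + 1) * (univ.val.map lam).esymm k) * hsign

end Polynomial

theorem esymmFin_eq_esymm {N : ℕ} (k : ℕ) (lam : Fin N → ℝ) :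
    esymmFin k lam = (univ.val.map lam).esymm k :=
  (Finset.esymm_map_val _ _ _).symm

theorem Orthonormal.fin_cons {𝕜 E : Type*} [RCLike 𝕜] [NormedAddCommGroup E]
    [InnerProductSpace 𝕜 E] {d : ℕ} {b : Fin d → E} (hb : Orthonormal 𝕜 b) {u : E}
    (hu : ‖u‖ = 1) (hub : ∀ i, inner 𝕜 u (b i) = 0) :
    Orthonormal 𝕜 (Fin.cons u b : Fin (d + 1) → E) := by
  rw [orthonormal_iff_ite] at hb ⊢
  intro i j
  cases i using Fin.cases <;> cases j using Fin.cases <;>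
    simp [hb, hub, inner_eq_zero_symm.mp (hub _), inner_self_eq_norm_sq_to_K, hu, Fin.succ_inj,
      (Fin.succ_ne_zero _).symm]

theorem Orthonormal.card_eq_of_span_eq_orthogonal_singleton {𝕜 E : Type*} [RCLike 𝕜]
    [NormedAddCommGroup E] [InnerProductSpace 𝕜 E] {n d : ℕ}
    [Fact (Module.finrank 𝕜 E = n + 1)] {b : Fin d → E} (hb : Orthonormal 𝕜 b) {v : E}
    (hv : v ≠ 0) (hspan : Submodule.span 𝕜 (Set.range b) = (𝕜 ∙ v)ᗮ) : d = n := by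
  have hdim := finrank_span_eq_card hb.linearIndependent
  rwa [hspan, Submodule.finrank_orthogonal_span_singleton (n := n) hv, Fintype.card_fin,
    eq_comm] at hdim

theorem conjTranspose_toMatrix_mul_toMatrix_of_orthonormal {n d : ℕ}
    {g : Fin d → EuclideanSpace ℂ (Fin n)} (hg : Orthonormal ℂ g) :
    ((EuclideanSpace.basisFun (Fin n) ℂ).toBasis.toMatrix g)ᴴ *
      (EuclideanSpace.basisFun (Fin n) ℂ).toBasis.toMatrix g = 1 := by
  rw [← gram_eq_one_iff_orthonormal.mpr hg,
    gram_eq_conjTranspose_mul (EuclideanSpace.basisFun _ ℂ)]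
  rfl

theorem compressionMatrix_eq_conjTranspose_mul_mul {n d : ℕ} (A : Matrix (Fin n) (Fin n) ℂ)
    (b : Fin d → EuclideanSpace ℂ (Fin n)) :
    compressionMatrix A b = ((EuclideanSpace.basisFun (Fin n) ℂ).toBasis.toMatrix b)ᴴ * A *
      (EuclideanSpace.basisFun (Fin n) ℂ).toBasis.toMatrix b := by
  ext i j
  simp only [compressionMatrix, mul_apply, Module.Basis.toMatrix_apply, Matrix.toLpLin_apply,
    PiLp.inner_apply, mulVec, dotProduct, RCLike.inner_apply, sum_mul]
  rw [sum_comm]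
  exact sum_congr rfl fun _ _ => sum_congr rfl fun _ _ => by
    simp [Module.Basis.toMatrix_apply]; ring

theorem isHermitian_compressionMatrix {n d : ℕ} {A : Matrix (Fin n) (Fin n) ℂ}
    (hA : A.IsHermitian) (b : Fin d → EuclideanSpace ℂ (Fin n)) :
    (compressionMatrix A b).IsHermitian := by
  rw [compressionMatrix_eq_conjTranspose_mul_mul]
  exact isHermitian_conjTranspose_mul_mul _ hA

theorem charpoly_compressionMatrix_diagonal {d : ℕ} (w : Fin (d + 1) → ℂ)
    {u : EuclideanSpace ℂ (Fin (d + 1))} {b : Fin d → EuclideanSpace ℂ (Fin (d + 1))}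
    (h : Orthonormal ℂ (Fin.cons u b : Fin (d + 1) → EuclideanSpace ℂ (Fin (d + 1)))) :
    (compressionMatrix (diagonal w) b).charpoly =
      ∑ i, C (starRingEnd ℂ (u i) * u i) * ∏ j ∈ univ.erase i, (X - C (w j)) := by
  set G := (EuclideanSpace.basisFun (Fin (d + 1)) ℂ).toBasis.toMatrix
    (Fin.cons u b : Fin (d + 1) → EuclideanSpace ℂ (Fin (d + 1)))
  have hminor : compressionMatrix (diagonal w) b =
      (Gᴴ * diagonal w * G).submatrix Fin.succ Fin.succ := by
    rw [compressionMatrix_eq_conjTranspose_mul_mul]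
    ext i j
    simp [G, mul_apply, Module.Basis.toMatrix_apply]
  rw [hminor, charpoly_submatrix_succ_mul_diagonal_mul
    (conjTranspose_toMatrix_mul_toMatrix_of_orthonormal h)]
  simp [Module.Basis.toMatrix_apply]

theorem charpoly_compressionMatrix_diagonal_of_norm_eq_one {d : ℕ} (w : Fin (d + 1) → ℂ)
    {v : EuclideanSpace ℂ (Fin (d + 1))} (hv : ∀ i, ‖v i‖ = 1)
    {b : Fin d → EuclideanSpace ℂ (Fin (d + 1))} (hb : Orthonormal ℂ b)
    (hbv : ∀ i, b i ∈ (ℂ ∙ v)ᗮ) :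
    (compressionMatrix (diagonal w) b).charpoly =
      C ((d + 1 : ℂ)⁻¹) * derivative (∏ j, (X - C (w j))) := by
  have hv_norm : ‖v‖ ^ 2 = d + 1 := by simp [EuclideanSpace.norm_sq_eq, hv]
  have hv0 : v ≠ 0 := fun h => by simpa [h] using hv 0
  set u := ((‖v‖ : ℂ)⁻¹) • v
  have hu : Orthonormal ℂ (Fin.cons u b : Fin (d + 1) → EuclideanSpace ℂ (Fin (d + 1))) :=
    hb.fin_cons (norm_smul_inv_norm hv0) fun i => by
      rw [inner_smul_left, Submodule.mem_orthogonal_singleton_iff_inner_right.mp (hbv i),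
        mul_zero]
  have hweight : ∀ i, starRingEnd ℂ (u i) * u i = (d + 1 : ℂ)⁻¹ := fun i => by
    rw [Complex.conj_mul']
    simp [u, hv]
    exact_mod_cast hv_norm
  rw [charpoly_compressionMatrix_diagonal w hu, derivative_prod_X_sub_C, mul_sum]
  simp [hweight]

theorem stmt4_general (n m : ℕ) (hmn : m < n)
    (lam : Fin n → ℝ)
    (hpos : ∀ k, 1 ≤ k → k ≤ m → 0 < esymmFin k lam)
    (a : Fin n → ℝ) (ha : ∀ i, a i = 1 ∨ a i = -1) :
    CompressionMPositive m (Matrix.diagonal fun i => (lam i : ℂ))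
      (ℂ ∙ ((EuclideanSpace.equiv (Fin n) ℂ).symm fun i => (a i : ℂ)))ᗮ := by
  intro d b hb hbH hspan
  set v : EuclideanSpace ℂ (Fin n) := (EuclideanSpace.equiv (Fin n) ℂ).symm fun i => (a i : ℂ)
  have hv : ∀ i, ‖v i‖ = 1 := fun i => by rcases ha i with h | h <;> simp [v, h]
  obtain ⟨n, rfl⟩ : ∃ n', n = n' + 1 := ⟨n - 1, by omega⟩
  have : Fact (Module.finrank ℂ (EuclideanSpace ℂ (Fin (n + 1))) = n + 1) :=
    ⟨finrank_euclideanSpace_fin⟩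
  obtain rfl : d = n :=
    hb.card_eq_of_span_eq_orthogonal_singleton (fun h => by simpa [h] using hv 0) hspan
  have hA : (diagonal fun i => (lam i : ℂ)).IsHermitian :=
    isHermitian_diagonal_of_self_adjoint _ (by ext; simp)
  have hBH := isHermitian_compressionMatrix hA b
  have hcharpoly : ∏ i, (X - C (hBH.eigenvalues i)) =
      C (d + 1 : ℝ)⁻¹ * derivative (∏ j, (X - C (lam j))) := by
    refine hBH.prod_X_sub_C_eigenvalues_eq ?_
    rw [charpoly_compressionMatrix_diagonal_of_norm_eq_one _ hv hb hbH, Polynomial.map_mul,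
      ← derivative_map]
    simp [Polynomial.map_prod]
  refine ⟨hBH, fun k hk hkm => ?_⟩
  rw [esymmFin_eq_esymm, esymm_eq_of_prod_X_sub_C_eq_C_mul_derivative hcharpoly (by omega),
    ← esymmFin_eq_esymm]
  have hfactor : (0 : ℝ) < (d + 1 - k : ℕ) := by norm_cast; omega
  have hesymm := hpos k hk hkm
  positivity

/-- Remark 2.3: if `A = diag(λ₁, …, λ_n)` is a real diagonal matrix which is
`m`-positive (`1 ≤ m ≤ n - 1`), then for every sign vector `a ∈ {±1}^n` the compression of `A`
to the hyperplane `{z : ∑ i, a i * z i = 0}` is `m`-positive. -/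
theorem stmt4 (n m : ℕ) (hm : 1 ≤ m) (hmn : m < n)
    (lam : Fin n → ℝ)
    (hpos : ∀ k, 1 ≤ k → k ≤ m → 0 < esymmFin k lam)
    (a : Fin n → ℝ) (ha : ∀ i, a i = 1 ∨ a i = -1) :
    CompressionMPositive m (Matrix.diagonal fun i => (lam i : ℂ))
      (ℂ ∙ ((EuclideanSpace.equiv (Fin n) ℂ).symm fun i => (a i : ℂ)))ᗮ :=
  stmt4_general n m hmn lam hpos a ha
end
end

section
/- Let n ≥ 1 and let 0 ≤ k < n be integers. Let f be an alternating ℝ-multilinear map from (ℂ^n)^k to ℂ, where ℂ^n is regarded as a real vector space. Suppose that for every j ∈ {1, ..., n}, f vanishes whenever all of its k arguments lie in the complex coordinate hyperplane H_j = {z ∈ ℂ^n : z_j = 0}. Then f = 0. -/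
open Finset
open scoped ComplexOrder

noncomputable section

theorem Fintype.exists_forall_ne_of_card_lt {α β : Type*} [Fintype α] [Fintype β] (g : α → β)
    (h : Fintype.card α < Fintype.card β) : ∃ b, ∀ a, g a ≠ b := by
  by_contra! hsurj
  exact (Fintype.card_le_of_surjective g hsurj).not_gt h

/-- Since the arguments are fewer than the coordinates, every tuple of standard basis vectors
of `κ → M` misses some coordinate `j`, hence lies in the hyperplane `{z | z j = 0}`. -/
theorem MultilinearMap.eq_zero_of_forall_coord_eq_zero {R M N ι κ : Type*} [CommSemiring R]
    [AddCommMonoid M] [Module R M] [Module.Free R M] [AddCommMonoid N] [Module R N]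
    [Fintype ι] [Fintype κ] (hcard : Fintype.card ι < Fintype.card κ)
    (f : MultilinearMap R (fun _ : ι => κ → M) N)
    (hf : ∀ j : κ, ∀ v : ι → κ → M, (∀ i, v i j = 0) → f v = 0) : f = 0 := by
  classical
  refine Module.Basis.ext_multilinear
    (fun _ => Pi.basis fun _ : κ => Module.Free.chooseBasis R M) fun v => ?_
  obtain ⟨j, hj⟩ := Fintype.exists_forall_ne_of_card_lt (fun i => (v i).1) hcard
  refine (hf j _ fun i => ?_).trans (zero_apply _).symm
  simp only [Pi.basis_apply, Pi.single_eq_of_ne' (hj i)]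

theorem AlternatingMap.eq_zero_of_forall_coord_eq_zero {R M N ι κ : Type*} [CommSemiring R]
    [AddCommMonoid M] [Module R M] [Module.Free R M] [AddCommMonoid N] [Module R N]
    [Fintype ι] [Fintype κ] (hcard : Fintype.card ι < Fintype.card κ)
    (f : AlternatingMap R (κ → M) N ι)
    (hf : ∀ j : κ, ∀ v : ι → κ → M, (∀ i, v i j = 0) → f v = 0) : f = 0 :=
  AlternatingMap.coe_multilinearMap_injective <|
    f.toMultilinearMap.eq_zero_of_forall_coord_eq_zero hcard hf

theorem stmt7_general (n k : ℕ) (hk : k < n)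
    (f : AlternatingMap ℝ (Fin n → ℂ) ℂ (Fin k))
    (hf : ∀ j : Fin n, ∀ v : Fin k → (Fin n → ℂ), (∀ i, v i j = 0) → f v = 0) :
    f = 0 :=
  f.eq_zero_of_forall_coord_eq_zero (by simpa using hk) hf

/-- end of Lemma 3.3: an alternating `ℝ`-multilinear map
`f : (ℂ^n)^k → ℂ` (with `k < n`) which vanishes whenever all its arguments lie in a single
complex coordinate hyperplane `H_j = {z : z j = 0}` must be zero. -/
theorem stmt7 (n k : ℕ) (hn : 1 ≤ n) (hk : k < n)
    (f : AlternatingMap ℝ (Fin n → ℂ) ℂ (Fin k))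
    (hf : ∀ j : Fin n, ∀ v : Fin k → (Fin n → ℂ), (∀ i, v i j = 0) → f v = 0) :
    f = 0 :=
  stmt7_general n k hk f hf
end
end

section
/- Let 1 ≤ m ≤ n−1 and let A_1, ..., A_r be n×n Hermitian matrices, each of which is m-positive and positive semidefinite. Then there exists an orthonormal basis (e_1, ..., e_n) of ℂ^n (with respect to the standard Hermitian inner product) such that for every i ∈ {1, ..., r} and every j ∈ {1, ..., n}, the compression of A_i to the hyperplane e_j^⊥ is m-positive as a Hermitian endomorphism of e_j^⊥. -/
open Finset
open scoped ComplexOrder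

noncomputable section

/-! For positive semidefinite `A`, being `m`-positive just means `m ≤ rank A`, and the
compression of `A` to a subspace `H` is again positive semidefinite with kernel `H ∩ ker A`.
Hence the compression to a hyperplane `v^⊥` has rank `n - 1 - dim (v^⊥ ∩ ker A)`, which is at
least `m` when `ker A = 0` or `ker A ⊄ v^⊥`, since `dim ker A ≤ n - m`. It therefore suffices to
find an orthonormal basis none of whose vectors lies in one of the finitely many proper subspaces
`(ker A_i)^⊥`. Such a basis is built one vector at a time, using that a vector space over an
infinite field is not a finite union of proper subspaces; choosing the new unit vector `u ∈ V`
also outside `(V ∩ w)^⊥` ensures that the remaining space `u^⊥ ∩ V` is still not contained in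
any of the subspaces `w` to be avoided. -/

open Module Submodule
open scoped InnerProductSpace

section ElementarySymmetric

theorem esymmFin_pos_of_le_card {N k : ℕ} {lam : Fin N → ℝ} (h0 : ∀ i, 0 ≤ lam i)
    (hk : k ≤ #{i | lam i ≠ 0}) : 0 < esymmFin k lam := by
  obtain ⟨s, hs, rfl⟩ := exists_subset_card_eq hk
  refine sum_pos' (fun t _ => prod_nonneg fun i _ => h0 i) ⟨s, ?_, ?_⟩
  · simp
  · exact prod_pos fun i hi => (h0 i).lt_of_ne' (mem_filter.mp (hs hi)).2

theorem le_card_of_esymmFin_pos {N k : ℕ} {lam : Fin N → ℝ} (h : 0 < esymmFin k lam) :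
    k ≤ #{i | lam i ≠ 0} := by
  by_contra! hlt
  refine h.ne' (sum_eq_zero fun s hs => ?_)
  have hcard : #{i | lam i ≠ 0} < #s := (mem_powersetCard_univ.mp hs).symm ▸ hlt
  obtain ⟨i, his, hi⟩ := not_subset.mp fun hsub => (card_le_card hsub).not_gt hcard
  exact prod_eq_zero his (by simpa using hi)

theorem MPositive.le_rank {d m : ℕ} {M : Matrix (Fin d) (Fin d) ℂ} (h : MPositive m M) :
    m ≤ M.rank := by
  obtain ⟨hM, hpos⟩ := h
  rcases Nat.eq_zero_or_pos m with rfl | hm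
  · exact Nat.zero_le _
  rw [hM.rank_eq_card_non_zero_eigs, Fintype.card_subtype]
  exact le_card_of_esymmFin_pos (hpos m hm le_rfl)

theorem Matrix.PosSemidef.mPositive_of_le_rank {d m : ℕ} {M : Matrix (Fin d) (Fin d) ℂ}
    (hM : M.PosSemidef) (h : m ≤ M.rank) : MPositive m M := by
  refine ⟨hM.1, fun k _ hkm => esymmFin_pos_of_le_card hM.eigenvalues_nonneg ?_⟩
  rw [hM.1.rank_eq_card_non_zero_eigs, Fintype.card_subtype] at h
  exact hkm.trans h

end ElementarySymmetric

section Compression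

open Matrix

variable {n d : ℕ}

theorem compressionMatrix_isHermitian {A : Matrix (Fin n) (Fin n) ℂ} (hA : A.IsHermitian)
    (b : Fin d → EuclideanSpace ℂ (Fin n)) : (compressionMatrix A b).IsHermitian := by
  ext i j
  exact (inner_conj_symm _ _).trans (isSymmetric_toEuclideanLin_iff.mpr hA _ _)

theorem compressionMatrix_mulVec_apply (A : Matrix (Fin n) (Fin n) ℂ)
    (b : Fin d → EuclideanSpace ℂ (Fin n)) (x : Fin d → ℂ) (i : Fin d) :
    (compressionMatrix A b *ᵥ x) i
      = ⟪b i, toEuclideanLin A (Fintype.linearCombination ℂ b x)⟫_ℂ := by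
  simp only [Fintype.linearCombination_apply, map_sum, map_smul, inner_sum, inner_smul_right,
    mulVec, dotProduct, compressionMatrix, mul_comm]

theorem star_dotProduct_compressionMatrix_mulVec (A : Matrix (Fin n) (Fin n) ℂ)
    (b : Fin d → EuclideanSpace ℂ (Fin n)) (x : Fin d → ℂ) :
    star x ⬝ᵥ (compressionMatrix A b *ᵥ x)
      = ⟪Fintype.linearCombination ℂ b x,
          toEuclideanLin A (Fintype.linearCombination ℂ b x)⟫_ℂ := by
  conv_rhs => rw [Fintype.linearCombination_apply ℂ b x]
  simp only [dotProduct, compressionMatrix_mulVec_apply, sum_inner, inner_smul_left]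
  rfl

theorem compressionMatrix_posSemidef {A : Matrix (Fin n) (Fin n) ℂ} (hA : A.PosSemidef)
    (b : Fin d → EuclideanSpace ℂ (Fin n)) : (compressionMatrix A b).PosSemidef := by
  refine .of_dotProduct_mulVec_nonneg (compressionMatrix_isHermitian hA.1 b) fun x => ?_
  rw [star_dotProduct_compressionMatrix_mulVec, EuclideanSpace.inner_eq_star_dotProduct,
    dotProduct_comm]
  exact hA.dotProduct_mulVec_nonneg _

theorem Matrix.PosSemidef.toEuclideanLin_eq_zero_iff {A : Matrix (Fin n) (Fin n) ℂ}
    (hA : A.PosSemidef) (v : EuclideanSpace ℂ (Fin n)) :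
    toEuclideanLin A v = 0 ↔ ⟪v, toEuclideanLin A v⟫_ℂ = 0 := by
  rw [EuclideanSpace.inner_eq_star_dotProduct, dotProduct_comm, ← WithLp.ofLp_eq_zero]
  exact (hA.dotProduct_mulVec_zero_iff _).symm

theorem ker_compressionMatrix_mulVecLin {A : Matrix (Fin n) (Fin n) ℂ} (hA : A.PosSemidef)
    (b : Fin d → EuclideanSpace ℂ (Fin n)) :
    LinearMap.ker (compressionMatrix A b).mulVecLin
      = (LinearMap.ker (toEuclideanLin A)).comap (Fintype.linearCombination ℂ b) := by
  ext x
  simp only [LinearMap.mem_ker, mem_comap, mulVecLin_apply]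
  constructor
  · intro hx
    rw [hA.toEuclideanLin_eq_zero_iff, ← star_dotProduct_compressionMatrix_mulVec, hx,
      dotProduct_zero]
  · intro hx
    ext i
    rw [compressionMatrix_mulVec_apply, hx, inner_zero_right, Pi.zero_apply]

theorem Matrix.rank_add_finrank_ker_toEuclideanLin {𝕜 ι : Type*} [RCLike 𝕜] [Fintype ι]
    [DecidableEq ι] (A : Matrix ι ι 𝕜) :
    A.rank + finrank 𝕜 (LinearMap.ker (toEuclideanLin A)) = Fintype.card ι := by
  rw [rank_eq_finrank_range_toLin A (EuclideanSpace.basisFun ι 𝕜).toBasis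
    (EuclideanSpace.basisFun ι 𝕜).toBasis, ← toEuclideanLin_eq_toLin_orthonormal,
    LinearMap.finrank_range_add_finrank_ker, finrank_euclideanSpace]

theorem rank_compressionMatrix_add_finrank_inf_ker {A : Matrix (Fin n) (Fin n) ℂ}
    (hA : A.PosSemidef) {b : Fin d → EuclideanSpace ℂ (Fin n)} (hb : LinearIndependent ℂ b) :
    (compressionMatrix A b).rank
      + finrank ℂ ↥(span ℂ (Set.range b) ⊓ LinearMap.ker (toEuclideanLin A)) = d := by
  have hker : finrank ℂ (LinearMap.ker (compressionMatrix A b).mulVecLin)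
      = finrank ℂ ↥(span ℂ (Set.range b) ⊓ LinearMap.ker (toEuclideanLin A)) := by
    rw [ker_compressionMatrix_mulVecLin hA, ← Fintype.range_linearCombination,
      ← map_comap_eq,
      LinearEquiv.finrank_eq (equivMapOfInjective _ hb.fintypeLinearCombination_injective _)]
  rw [rank, ← hker, LinearMap.finrank_range_add_finrank_ker, finrank_fin_fun]

theorem compressionMPositive_of_add_finrank_inf_ker_le {m : ℕ} {A : Matrix (Fin n) (Fin n) ℂ}
    (hA : A.PosSemidef) {H : Submodule ℂ (EuclideanSpace ℂ (Fin n))}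
    (h : m + finrank ℂ ↥(H ⊓ LinearMap.ker (toEuclideanLin A)) ≤ finrank ℂ H) :
    CompressionMPositive m A H := by
  intro d b hb _ hspan
  have hrank := rank_compressionMatrix_add_finrank_inf_ker hA hb.linearIndependent
  have hd : finrank ℂ H = d := by
    rw [← hspan, finrank_span_eq_card hb.linearIndependent, Fintype.card_fin]
  rw [hspan] at hrank
  exact (compressionMatrix_posSemidef hA b).mPositive_of_le_rank (by omega)

end Compression

theorem Subspace.exists_mem_forall_notMem_of_forall_not_le {k E : Type*} [DivisionRing k]
    [Infinite k] [AddCommGroup E] [Module k E] {V : Subspace k E} {W : Finset (Subspace k E)}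
    (h : ∀ w ∈ W, ¬ V ≤ w) : ∃ v ∈ V, ∀ w ∈ W, v ∉ w := by
  have hcover : ⋃ w : W, ((w : Subspace k E).comap V.subtype : Set V) ≠ Set.univ := fun hcov =>
    let ⟨w, hw⟩ := Subspace.exists_eq_top_of_iUnion_eq_univ hcov
    h w w.2 (comap_subtype_eq_top.mp hw)
  obtain ⟨x, hx⟩ := (Set.ne_univ_iff_exists_notMem _).mp hcover
  exact ⟨x, x.2, fun w hw hxw => hx (Set.mem_iUnion.mpr ⟨⟨w, hw⟩, hxw⟩)⟩

section OrthonormalAvoiding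

variable {𝕜 E : Type*} [RCLike 𝕜] [NormedAddCommGroup E] [InnerProductSpace 𝕜 E]

theorem exists_norm_eq_one_mem_forall_notMem {V : Submodule 𝕜 E} {W : Finset (Submodule 𝕜 E)}
    (hV : V ≠ ⊥) (h : ∀ w ∈ W, ¬ V ≤ w) : ∃ u ∈ V, ‖u‖ = 1 ∧ ∀ w ∈ W, u ∉ w := by
  classical
  obtain ⟨v, hvV, hv⟩ := Subspace.exists_mem_forall_notMem_of_forall_not_le (W := insert ⊥ W)
    (forall_mem_insert _ _ _ |>.mpr ⟨fun hle => hV (le_bot_iff.mp hle), h⟩)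
  have hv0 : v ≠ 0 := fun h0 => hv ⊥ (mem_insert_self _ _) (h0 ▸ zero_mem _)
  have hc : (‖v‖⁻¹ : 𝕜) ≠ 0 := by simpa using hv0
  refine ⟨(‖v‖⁻¹ : 𝕜) • v, smul_mem _ _ hvV, norm_smul_inv_norm hv0, fun w hw => ?_⟩
  rw [smul_mem_iff _ hc]
  exact hv w (mem_insert_of_mem hw)

theorem Orthonormal.fin_cons_s11 {d : ℕ} {u : E} {g : Fin d → E} (hg : Orthonormal 𝕜 g)
    (hu : ‖u‖ = 1) (hug : ∀ i, ⟪u, g i⟫_𝕜 = 0) :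
    Orthonormal 𝕜 (Fin.cons u g : Fin (d + 1) → E) := by
  rw [orthonormal_iff_ite] at hg ⊢
  intro i j
  cases i using Fin.cases <;> cases j using Fin.cases <;>
    simp [hg, hug, inner_self_eq_norm_sq_to_K, hu, inner_eq_zero_symm.mp (hug _),
      (Fin.succ_ne_zero _).symm]

variable [FiniteDimensional 𝕜 E]

theorem finrank_orthogonal_span_singleton_inf_lt {K : Submodule 𝕜 E} {v : E} (hv : v ∉ Kᗮ) :
    finrank 𝕜 ↥((𝕜 ∙ v)ᗮ ⊓ K) < finrank 𝕜 K := by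
  refine finrank_lt_finrank_of_lt (inf_le_right.lt_of_ne fun heq => hv ?_)
  rw [← span_singleton_le_iff_mem, ← le_orthogonal_iff_le_orthogonal, ← heq]
  exact inf_le_left

theorem orthogonal_span_singleton_inf_not_le {V w : Submodule 𝕜 E} {u : E} (hu : u ∈ V)
    (huw : u ∉ w) (hu' : u ∉ (V ⊓ w)ᗮ) : ¬ (𝕜 ∙ u)ᗮ ⊓ V ≤ w := by
  intro hle
  have hu0 : u ≠ 0 := fun h => huw (h ▸ zero_mem w)
  have hdim := finrank_add_inf_finrank_orthogonal (span_singleton_le_iff_mem _ _ |>.mpr hu)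
  rw [finrank_span_singleton hu0] at hdim
  have hlt : finrank 𝕜 ↥(V ⊓ w) < finrank 𝕜 V :=
    finrank_lt_finrank_of_lt (inf_le_left.lt_of_ne fun heq => huw (heq ▸ hu).2)
  have heq : (𝕜 ∙ u)ᗮ ⊓ V = V ⊓ w :=
    eq_of_le_of_finrank_le (le_inf inf_le_right hle) (by omega)
  refine hu' ((span_singleton_le_iff_mem _ _).mp ?_)
  rw [← le_orthogonal_iff_le_orthogonal, ← heq]
  exact inf_le_left

theorem exists_orthonormal_span_eq_forall_notMem (W : Finset (Submodule 𝕜 E)) {d : ℕ}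
    {V : Submodule 𝕜 E} (hV : finrank 𝕜 V = d) (hW : d ≠ 0 → ∀ w ∈ W, ¬ V ≤ w) :
    ∃ f : Fin d → E, Orthonormal 𝕜 f ∧ span 𝕜 (Set.range f) = V ∧ ∀ j, ∀ w ∈ W, f j ∉ w := by
  classical
  induction d generalizing V with
  | zero =>
    refine ⟨Fin.elim0, ⟨fun i => i.elim0, fun i => i.elim0⟩, ?_, fun j => j.elim0⟩
    rw [Set.range_eq_empty, span_empty, finrank_eq_zero.mp hV]
  | succ d ih =>
    let B := W ∪ (W.filter (V ⊓ · ≠ ⊥)).image fun w => (V ⊓ w)ᗮ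
    have hB : ∀ w ∈ B, ¬ V ≤ w := by
      simp only [B, mem_union, mem_image, mem_filter]
      rintro _ (hw | ⟨w, ⟨-, hw⟩, rfl⟩) hle
      · exact hW d.succ_ne_zero _ hw hle
      · exact hw (eq_bot_iff.mpr ((le_inf le_rfl (inf_le_left.trans hle)).trans
          (inf_orthogonal_eq_bot (V ⊓ w)).le))
    have hVbot : V ≠ ⊥ := fun h => by subst h; simp at hV
    obtain ⟨u, huV, hu1, huB⟩ := exists_norm_eq_one_mem_forall_notMem hVbot hB
    have huW : ∀ w ∈ W, u ∉ w := fun w hw => huB w (mem_union_left _ hw)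
    have hu_le : 𝕜 ∙ u ≤ V := (span_singleton_le_iff_mem _ _).mpr huV
    have hV' : finrank 𝕜 ↥((𝕜 ∙ u)ᗮ ⊓ V) = d := by
      have := finrank_add_inf_finrank_orthogonal hu_le
      rw [finrank_span_singleton (norm_ne_zero_iff.mp (hu1 ▸ one_ne_zero)), hV] at this
      omega
    obtain ⟨g, hg, hgspan, hgW⟩ := ih hV' fun hd w hw hle => by
      by_cases hVw : V ⊓ w = ⊥
      · have : (𝕜 ∙ u)ᗮ ⊓ V = ⊥ := eq_bot_iff.mpr (hVw ▸ le_inf inf_le_right hle)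
        rw [this, finrank_bot] at hV'
        exact hd hV'.symm
      · exact orthogonal_span_singleton_inf_not_le huV (huW w hw)
          (huB _ (mem_union_right _ (mem_image_of_mem _ (mem_filter.mpr ⟨hw, hVw⟩)))) hle
    have hug : ∀ i, ⟪u, g i⟫_𝕜 = 0 := fun i => by
      have hgi : g i ∈ (𝕜 ∙ u)ᗮ ⊓ V := hgspan ▸ subset_span ⟨i, rfl⟩
      exact mem_orthogonal_singleton_iff_inner_right.mp hgi.1
    refine ⟨Fin.cons u g, hg.fin_cons_s11 hu1 hug, ?_, fun j w hw => ?_⟩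
    · rw [Fin.range_cons, span_insert, hgspan, sup_orthogonal_inf_of_hasOrthogonalProjection hu_le]
    · cases j using Fin.cases
      · simpa using huW w hw
      · simpa using hgW _ w hw

theorem exists_orthonormalBasis_forall_notMem {n : ℕ} (hn : finrank 𝕜 E = n)
    (W : Finset (Submodule 𝕜 E)) (hW : ∀ w ∈ W, w ≠ ⊤) :
    ∃ e : OrthonormalBasis (Fin n) 𝕜 E, ∀ j, ∀ w ∈ W, e j ∉ w := by
  obtain ⟨f, hf, hspan, hfW⟩ := exists_orthonormal_span_eq_forall_notMem W
    (finrank_top 𝕜 E ▸ hn) fun _ w hw => (hW w hw <| top_le_iff.mp ·)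
  exact ⟨OrthonormalBasis.mk hf hspan.ge, by simpa using hfW⟩

end OrthonormalAvoiding

theorem compressionMPositive_orthogonal_span_singleton {n m : ℕ}
    {A : Matrix (Fin n) (Fin n) ℂ} (hA : A.PosSemidef) (hrank : m ≤ A.rank) (hmn : m < n)
    {v : EuclideanSpace ℂ (Fin n)} (hv : v ≠ 0)
    (hker : LinearMap.ker (Matrix.toEuclideanLin A) ≠ ⊥ →
      v ∉ (LinearMap.ker (Matrix.toEuclideanLin A))ᗮ) :
    CompressionMPositive m A (ℂ ∙ v)ᗮ := by
  refine compressionMPositive_of_add_finrank_inf_ker_le hA ?_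
  have hH := (ℂ ∙ v).finrank_add_finrank_orthogonal
  rw [finrank_span_singleton hv, finrank_euclideanSpace_fin] at hH
  have hK := A.rank_add_finrank_ker_toEuclideanLin
  rw [Fintype.card_fin] at hK
  rcases eq_or_ne (LinearMap.ker (Matrix.toEuclideanLin A)) ⊥ with hK0 | hK0
  · rw [hK0, inf_bot_eq, finrank_bot]
    omega
  · have := finrank_orthogonal_span_singleton_inf_lt (hker hK0)
    omega

theorem stmt11_general (n m r : ℕ) (hmn : m < n)
    (A : Fin r → Matrix (Fin n) (Fin n) ℂ)
    (hpsd : ∀ i, (A i).PosSemidef) (hmpos : ∀ i, MPositive m (A i)) :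
    ∃ e : OrthonormalBasis (Fin n) ℂ (EuclideanSpace ℂ (Fin n)),
      ∀ (i : Fin r) (j : Fin n), CompressionMPositive m (A i) (ℂ ∙ (e j))ᗮ := by
  classical
  let K i := LinearMap.ker (Matrix.toEuclideanLin (A i))
  obtain ⟨e, he⟩ := exists_orthonormalBasis_forall_notMem (finrank_euclideanSpace_fin (𝕜 := ℂ))
    ((univ.filter (K · ≠ ⊥)).image fun i => (K i)ᗮ) (by simp [K, orthogonal_eq_top_iff])
  refine ⟨e, fun i j => compressionMPositive_orthogonal_span_singleton (hpsd i) (hmpos i).le_rank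
    hmn (e.orthonormal.ne_zero j) fun hK => he j _ ?_⟩
  exact mem_image_of_mem _ (mem_filter.mpr ⟨mem_univ i, hK⟩)

/-- key step in Lemma 3.3: if `A₁, …, A_r` are Hermitian matrices, each
`m`-positive and positive semidefinite (`1 ≤ m ≤ n - 1`), then there is an orthonormal basis
`e₁, …, e_n` of `ℂ^n` such that each compression of each `A_i` to each hyperplane `e_j^⊥`
is `m`-positive. -/
theorem stmt11 (n m r : ℕ) (hm : 1 ≤ m) (hmn : m < n)
    (A : Fin r → Matrix (Fin n) (Fin n) ℂ)
    (hpsd : ∀ i, (A i).PosSemidef) (hmpos : ∀ i, MPositive m (A i)) :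
    ∃ e : OrthonormalBasis (Fin n) ℂ (EuclideanSpace ℂ (Fin n)),
      ∀ (i : Fin r) (j : Fin n), CompressionMPositive m (A i) (ℂ ∙ (e j))ᗮ :=
  stmt11_general n m r hmn A hpsd hmpos
end
end
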